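/- arXiv:2605.21727 — 4 statements merged into one kernel-verified Lean document; each statement's English description precedes it below -/
import Mathlib

section
/- For all integers 1 ≤ s ≤ m, every mask in M(s,m) is a codeword of the Reed–Muller code of order s−1 and length 2^m: M(s,m) ⊆ RM(s−1,m). -/
/-- The recursively constructed mask set `M(s, m)`, viewed as a set of vectors of
length `2^m` indexed by the points of `𝔽₂^m` (i.e. functions `(Fin m → ZMod 2) → ZMod 2`).
For a point `p : Fin (m+1) → ZMod 2`, the coordinate `p 0` selects the half
(left half for `p 0 = 0`) and `Fin.tail p` the position inside that half, so that
the concatenation `[x, y]` corresponds to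
`fun p => if p 0 = 0 then x (Fin.tail p) else y (Fin.tail p)`. -/
def maskSet : (m : ℕ) → ℕ → Set ((Fin m → ZMod 2) → ZMod 2)
  | 0, _ => Set.univ
  | m + 1, s =>
    if s ≤ 1 then {fun _ => 0, fun _ => 1}
    else if m + 1 ≤ Nat.clog 2 s then Set.univ
    else
      ((fun g : (Fin m → ZMod 2) → ZMod 2 => fun p => g (Fin.tail p)) '' maskSet m s) ∪
        ⋃ i ∈ Finset.Ico 1 s,
          {f | ∃ x ∈ maskSet m i, ∃ y ∈ maskSet m (s - i),
            f = fun p => if p 0 = 0 then x (Fin.tail p) else y (Fin.tail p)}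

/-- The Reed–Muller code `RM(r, m)`: the set of evaluation vectors over `𝔽₂^m` of
polynomials in `m` variables over `𝔽₂` of total degree at most `r`. -/
def RMCode (r m : ℕ) : Set ((Fin m → ZMod 2) → ZMod 2) :=
  {f | ∃ q : MvPolynomial (Fin m) (ZMod 2),
    q.totalDegree ≤ r ∧ ∀ x : Fin m → ZMod 2, f x = MvPolynomial.eval x q}

open MvPolynomial

lemma zmod2_aux (a b : ZMod 2) : a + b + 1 = if a = b then 1 else 0 := by
  revert a b; decide

lemma mem_RMCode_of_le {n r : ℕ} (h : n ≤ r) (f : (Fin n → ZMod 2) → ZMod 2) :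
    f ∈ RMCode r n := by
  classical
  refine ⟨∑ a : Fin n → ZMod 2, C (f a) * ∏ i, (X i + C (a i) + 1), ?_, ?_⟩
  · refine le_trans (totalDegree_finset_sum _ _) (Finset.sup_le fun a _ => ?_)
    refine le_trans (totalDegree_mul _ _) ?_
    have h1 : (∏ i, (X i + C (a i) + 1) : MvPolynomial (Fin n) (ZMod 2)).totalDegree ≤ n := by
      refine le_trans (totalDegree_finset_prod _ _) ?_
      have : ∀ i : Fin n, (X i + C (a i) + 1 : MvPolynomial (Fin n) (ZMod 2)).totalDegree ≤ 1 := by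
        intro i
        refine le_trans (totalDegree_add _ _) ?_
        simp only [totalDegree_one, max_le_iff]
        refine ⟨le_trans (totalDegree_add _ _) ?_, Nat.zero_le _⟩
        simp [totalDegree_X, totalDegree_C]
      calc ∑ i : Fin n, (X i + C (a i) + 1 : MvPolynomial (Fin n) (ZMod 2)).totalDegree
          ≤ ∑ _i : Fin n, 1 := Finset.sum_le_sum fun i _ => this i
        _ = n := by simp
    simpa [totalDegree_C] using le_trans h1 h
  · intro x
    have key : ∀ a : Fin n → ZMod 2,
        (∏ i, (x i + a i + 1)) = if a = x then (1 : ZMod 2) else 0 := by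
      intro a
      by_cases hax : a = x
      · subst hax
        rw [if_pos rfl]
        apply Finset.prod_eq_one
        intro i _
        rw [zmod2_aux, if_pos rfl]
      · rw [if_neg hax]
        obtain ⟨i, hi⟩ : ∃ i, x i ≠ a i := by
          by_contra hcon
          push_neg at hcon
          exact hax (funext fun i => (hcon i).symm)
        exact Finset.prod_eq_zero (Finset.mem_univ i) (by rw [zmod2_aux, if_neg hi])
    have hev : ∀ a, eval x (C (f a) * ∏ i, (X i + C (a i) + 1)) =
        f a * (if a = x then (1 : ZMod 2) else 0) := by
      intro a
      rw [eval_mul, eval_C, map_prod]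
      simp only [eval_add, eval_X, eval_C, map_one]
      rw [key a]
    rw [map_sum, Finset.sum_congr rfl (fun a _ => hev a)]
    simp

lemma mem_RMCode_mono {n r r' : ℕ} (h : r ≤ r') {f : (Fin n → ZMod 2) → ZMod 2}
    (hf : f ∈ RMCode r n) : f ∈ RMCode r' n := by
  obtain ⟨q, hq, he⟩ := hf
  exact ⟨q, le_trans hq h, he⟩

lemma zmod2_cases (a : ZMod 2) : a = 0 ∨ a = 1 := by revert a; decide

lemma key_lemma : ∀ m s, 1 ≤ s → ∀ f ∈ maskSet m s, f ∈ RMCode (s - 1) m := by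
  intro m
  induction m with
  | zero => intro s hs f _; exact mem_RMCode_of_le (Nat.zero_le _) f
  | succ m ih =>
    intro s hs f hf
    rw [maskSet] at hf
    split_ifs at hf with h1 h2
    · simp only [Set.mem_insert_iff, Set.mem_singleton_iff] at hf
      rcases hf with rfl | rfl
      · exact ⟨C 0, by simp [totalDegree_C], by simp⟩
      · exact ⟨C 1, by simp [totalDegree_C], by simp⟩
    · -- universal case: m + 1 ≤ clog 2 s ≤ s - 1
      have hs2 : 2 ≤ s := by omega
      have hps : s ≤ 2 ^ (s - 1) := by
        have := Nat.lt_two_pow_self (n := s - 1)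
        omega
      have hc : Nat.clog 2 s ≤ s - 1 := (Nat.clog_le_iff_le_pow (by norm_num)).mpr hps
      exact mem_RMCode_of_le (by omega) f
    · rcases hf with ⟨g, hg, rfl⟩ | hf
      · obtain ⟨q, hq, he⟩ := ih s hs g hg
        refine ⟨rename Fin.succ q, le_trans (totalDegree_rename_le _ _) hq, fun p => ?_⟩
        rw [eval_rename]
        exact he (Fin.tail p)
      · simp only [Set.mem_iUnion, Finset.mem_Ico] at hf
        obtain ⟨i, ⟨hi1, hi2⟩, x, hx, y, hy, rfl⟩ := hf
        obtain ⟨qx, hqx, hex⟩ := ih i hi1 x hx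
        obtain ⟨qy, hqy, hey⟩ := ih (s - i) (by omega) y hy
        refine ⟨(1 + X 0) * rename Fin.succ qx + X 0 * rename Fin.succ qy, ?_, ?_⟩
        · refine le_trans (totalDegree_add _ _) (max_le ?_ ?_)
          · refine le_trans (totalDegree_mul _ _) ?_
            have d1 : (1 + X 0 : MvPolynomial (Fin (m+1)) (ZMod 2)).totalDegree ≤ 1 := by
              refine le_trans (totalDegree_add _ _) ?_
              simp [totalDegree_one, totalDegree_X]
            have d2 := le_trans (totalDegree_rename_le Fin.succ qx) hqx
            omega
          · refine le_trans (totalDegree_mul _ _) ?_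
            have d1 : (X 0 : MvPolynomial (Fin (m+1)) (ZMod 2)).totalDegree ≤ 1 := by
              simp [totalDegree_X]
            have d2 := le_trans (totalDegree_rename_le Fin.succ qy) hqy
            omega
        · intro p
          simp only [eval_add, eval_mul, map_one, eval_X, eval_rename]
          have hx' : x (Fin.tail p) = eval (p ∘ Fin.succ) qx := hex (Fin.tail p)
          have hy' : y (Fin.tail p) = eval (p ∘ Fin.succ) qy := hey (Fin.tail p)
          have h11 : (1 : ZMod 2) + 1 = 0 := by decide
          rcases zmod2_cases (p 0) with h0 | h0 <;>
            simp [h0, h11, hx', hy']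

/-- Every mask in `M(s,m)` is a codeword of the Reed–Muller code `RM(s-1, m)`. -/
theorem maskSet_subset_RM (s m : ℕ) (hs : 1 ≤ s) (hsm : s ≤ m) :
    maskSet m s ⊆ RMCode (s - 1) m := by
  intro f hf
  exact key_lemma m s hs f hf
end

section
/- For all integers 1 ≤ s ≤ m, any two distinct masks in M(s,m) differ in at least 2^{m−s+1} coordinate positions (the Hamming distance between any two distinct elements of M(s,m) is at least 2^{m−s+1}). -/
/-- The concatenation of two masks. -/
def maskCC {m : ℕ} (a b : (Fin m → ZMod 2) → ZMod 2) : (Fin (m+1) → ZMod 2) → ZMod 2 :=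
  fun p => if p 0 = 0 then a (Fin.tail p) else b (Fin.tail p)

lemma hammingDist_maskCC {m : ℕ} (a b a' b' : (Fin m → ZMod 2) → ZMod 2) :
    hammingDist (maskCC a b) (maskCC a' b') = hammingDist a a' + hammingDist b b' := by
  classical
  simp only [hammingDist, Finset.card_filter]
  rw [← Equiv.sum_comp (Fin.consEquiv fun _ : Fin (m+1) => ZMod 2)
      (fun p => if maskCC a b p ≠ maskCC a' b' p then (1:ℕ) else 0)]
  rw [Fintype.sum_prod_type]
  have huniv : (Finset.univ : Finset (ZMod 2)) = {0, 1} := by decide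
  rw [huniv, Finset.sum_insert (by decide), Finset.sum_singleton]
  congr 1

lemma hammingDist_consts (m : ℕ) :
    hammingDist (fun _ : Fin m → ZMod 2 => (0:ZMod 2)) (fun _ => 1) = 2^m := by
  simp [hammingDist, Finset.filter_true_of_mem]

lemma mem_maskSet_cases {m s : ℕ} (h1 : ¬ s ≤ 1) (h2 : ¬ (m + 1 ≤ Nat.clog 2 s))
    {x : (Fin (m+1) → ZMod 2) → ZMod 2} (hx : x ∈ maskSet (m+1) s) :
    (∃ g ∈ maskSet m s, x = maskCC g g) ∨
    (∃ i, 1 ≤ i ∧ i < s ∧ ∃ a ∈ maskSet m i, ∃ b ∈ maskSet m (s - i), x = maskCC a b) := by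
  rw [maskSet, if_neg h1, if_neg h2] at hx
  rcases hx with ⟨g, hg, rfl⟩ | hx
  · left
    refine ⟨g, hg, ?_⟩
    funext p
    simp [maskCC]
  · right
    rw [Set.mem_iUnion₂] at hx
    obtain ⟨i, hi, a, ha, b, hb, rfl⟩ := hx
    rw [Finset.mem_Ico] at hi
    exact ⟨i, hi.1, hi.2, a, ha, b, hb, rfl⟩

lemma maskCC_mem_maskSet {m s i : ℕ} (h1 : ¬ s ≤ 1) (h2 : ¬ (m + 1 ≤ Nat.clog 2 s))
    (hi1 : 1 ≤ i) (hi2 : i < s) {a b : (Fin m → ZMod 2) → ZMod 2}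
    (ha : a ∈ maskSet m i) (hb : b ∈ maskSet m (s - i)) :
    maskCC a b ∈ maskSet (m+1) s := by
  rw [maskSet, if_neg h1, if_neg h2]
  right
  rw [Set.mem_iUnion₂]
  exact ⟨i, Finset.mem_Ico.mpr ⟨hi1, hi2⟩, a, ha, b, hb, rfl⟩

lemma dup_mem_maskSet {m s : ℕ} (h1 : ¬ s ≤ 1) (h2 : ¬ (m + 1 ≤ Nat.clog 2 s))
    {g : (Fin m → ZMod 2) → ZMod 2} (hg : g ∈ maskSet m s) :
    maskCC g g ∈ maskSet (m+1) s := by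
  rw [maskSet, if_neg h1, if_neg h2]
  left
  exact ⟨g, hg, by funext p; simp [maskCC]⟩

lemma const_mem_maskSet_one {m : ℕ} (c : ZMod 2) : (fun _ => c) ∈ maskSet m 1 := by
  cases m with
  | zero => trivial
  | succ m =>
    rw [maskSet, if_pos le_rfl]
    fin_cases c
    · left; rfl
    · right; rfl

lemma maskSet_succ_subset : ∀ m s, maskSet m s ⊆ maskSet m (s + 1) := by
  intro m
  induction m with
  | zero => intro s x _; trivial
  | succ m ih =>
    intro s x hx
    by_cases hclog : m + 1 ≤ Nat.clog 2 (s + 1)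
    · by_cases hle : s + 1 ≤ 1
      · have hs0 : s = 0 := by omega
        subst hs0
        rw [maskSet, if_pos (by norm_num)] at hx
        rw [maskSet, if_pos le_rfl]
        exact hx
      · rw [maskSet, if_neg hle, if_pos hclog]; trivial
    · match s, hx with
      | 0, hx =>
        rw [maskSet, if_pos (by norm_num)] at hx
        rw [show (0:ℕ) + 1 = 1 from rfl, maskSet, if_pos le_rfl]
        exact hx
      | 1, hx =>
        rw [maskSet, if_pos le_rfl] at hx
        have key : ∀ c : ZMod 2, (fun _ => c : (Fin (m+1) → ZMod 2) → ZMod 2) =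
            maskCC (fun _ => c) (fun _ => c) := by
          intro c; funext p; simp [maskCC]
        rcases hx with rfl | rfl
        · rw [key 0]
          exact maskCC_mem_maskSet (by norm_num) hclog le_rfl (by norm_num)
            (const_mem_maskSet_one 0) (const_mem_maskSet_one 0)
        · rw [key 1]
          exact maskCC_mem_maskSet (by norm_num) hclog le_rfl (by norm_num)
            (const_mem_maskSet_one 1) (const_mem_maskSet_one 1)
      | (s+2), hx =>
        have h1 : ¬ (s + 2 ≤ 1) := by omega
        have h1' : ¬ (s + 2 + 1 ≤ 1) := by omega
        have h2 : ¬ (m + 1 ≤ Nat.clog 2 (s + 2)) := fun h =>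
          hclog (h.trans (Nat.clog_mono_right 2 (by omega)))
        rw [maskSet, if_neg h1, if_neg h2] at hx
        rcases hx with ⟨g, hg, rfl⟩ | hx
        · exact Set.mem_of_eq_of_mem (by funext p; simp [maskCC])
            (dup_mem_maskSet h1' hclog (ih _ hg))
        · rw [Set.mem_iUnion₂] at hx
          obtain ⟨i, hi, a, ha, b, hb, rfl⟩ := hx
          rw [Finset.mem_Ico] at hi
          have : s + 2 + 1 - i = (s + 2 - i) + 1 := by omega
          exact maskCC_mem_maskSet h1' hclog hi.1 (by omega) ha (this ▸ ih _ hb)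

lemma maskSet_subset {m : ℕ} : ∀ {i j : ℕ}, i ≤ j → maskSet m i ⊆ maskSet m j := by
  intro i j h
  induction j, h using Nat.le_induction with
  | base => exact subset_rfl
  | succ j _ ih => exact ih.trans (maskSet_succ_subset m j)

lemma maskSet_key : ∀ m s, 1 ≤ s → ∀ x ∈ maskSet m s, ∀ y ∈ maskSet m s, x ≠ y →
    2 ^ (m + 1 - s) ≤ hammingDist x y := by
  intro m
  induction m with
  | zero =>
    intro s hs x _ y _ hxy
    have h0 : 0 + 1 - s = 0 := by omega
    rw [h0, pow_zero]
    exact hammingDist_pos.mpr hxy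
  | succ m ih =>
    intro s hs x hx y hy hxy
    by_cases h1 : s ≤ 1
    · have hs1 : s = 1 := by omega
      subst hs1
      rw [maskSet, if_pos le_rfl] at hx hy
      have hd : hammingDist x y = 2 ^ (m+1) := by
        rcases hx with rfl | rfl <;> rcases hy with rfl | rfl
        · exact absurd rfl hxy
        · exact hammingDist_consts (m+1)
        · rw [hammingDist_comm]; exact hammingDist_consts (m+1)
        · exact absurd rfl hxy
      rw [hd]
      apply Nat.pow_le_pow_right (by norm_num)
      omega
    · by_cases h2 : m + 1 ≤ Nat.clog 2 s
      · have hlt : 2 ^ m < s := by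
          by_contra hc
          push_neg at hc
          have := (Nat.clog_le_iff_le_pow (by norm_num : 1 < 2)).mpr hc
          omega
        have hms : m + 1 + 1 - s = 0 := by
          have := Nat.lt_two_pow_self (n := m)
          omega
        rw [hms, pow_zero]
        exact hammingDist_pos.mpr hxy
      · have hs2 : 2 ≤ s := by omega
        have hexp : m + 1 + 1 - s = m + 2 - s := by omega
        rw [hexp]
        have hexp2 : m + 1 - (s - 1) = m + 2 - s := by omega
        have hdouble : 2 ^ (m + 2 - s) ≤ 2 ^ (m + 1 - s) + 2 ^ (m + 1 - s) := by
          calc 2 ^ (m + 2 - s) ≤ 2 ^ (m + 1 - s + 1) :=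
                Nat.pow_le_pow_right (by norm_num) (by omega)
            _ = 2 ^ (m + 1 - s) + 2 ^ (m + 1 - s) := by ring
        -- mixed case helper
        have hmixed : ∀ (g a b : (Fin m → ZMod 2) → ZMod 2) (i : ℕ),
            g ∈ maskSet m s → 1 ≤ i → i < s → a ∈ maskSet m i → b ∈ maskSet m (s - i) →
            maskCC g g ≠ maskCC a b →
            2 ^ (m + 2 - s) ≤ hammingDist (maskCC g g) (maskCC a b) := by
          intro g a b i hg hi1 hi2 ha hb hne
          rw [hammingDist_maskCC]
          by_cases hga : g = a
          · subst hga
            have hgb : g ≠ b := by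
              intro h; subst h; exact hne rfl
            have h1' : g ∈ maskSet m (s - 1) := maskSet_subset (by omega) ha
            have h2' : b ∈ maskSet m (s - 1) := maskSet_subset (by omega) hb
            have := ih (s - 1) (by omega) g h1' b h2' hgb
            rw [hexp2] at this
            omega
          · by_cases hgb : g = b
            · subst hgb
              have h1' : g ∈ maskSet m (s - 1) := maskSet_subset (by omega) hb
              have h2' : a ∈ maskSet m (s - 1) := maskSet_subset (by omega) ha
              have := ih (s - 1) (by omega) g h1' a h2' hga
              rw [hexp2] at this
              omega
            · have ha' : a ∈ maskSet m s := maskSet_subset (by omega) ha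
              have hb' : b ∈ maskSet m s := maskSet_subset (by omega) hb
              have d1 := ih s hs g hg a ha' hga
              have d2 := ih s hs g hg b hb' hgb
              omega
        rcases mem_maskSet_cases h1 h2 hx with ⟨g, hg, rfl⟩ | ⟨i, hi1, hi2, a, ha, b, hb, rfl⟩ <;>
          rcases mem_maskSet_cases h1 h2 hy with ⟨h, hh, rfl⟩ | ⟨j, hj1, hj2, a', ha', b', hb', rfl⟩
        · -- dup / dup
          have hgh : g ≠ h := by intro he; subst he; exact hxy rfl
          have := ih s hs g hg h hh hgh
          rw [hammingDist_maskCC]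
          omega
        · exact hmixed g a' b' j hg hj1 hj2 ha' hb' hxy
        · rw [hammingDist_comm]
          exact hmixed h a b i hh hi1 hi2 ha hb hxy.symm
        · -- split / split
          have hor : a ≠ a' ∨ b ≠ b' := by
            by_contra hc
            push_neg at hc
            exact hxy (by rw [hc.1, hc.2])
          rw [hammingDist_maskCC]
          rcases hor with hne | hne
          · have p1 : a ∈ maskSet m (s - 1) := maskSet_subset (by omega) ha
            have p2 : a' ∈ maskSet m (s - 1) := maskSet_subset (by omega) ha'
            have := ih (s - 1) (by omega) a p1 a' p2 hne
            rw [hexp2] at this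
            omega
          · have p1 : b ∈ maskSet m (s - 1) := maskSet_subset (by omega) hb
            have p2 : b' ∈ maskSet m (s - 1) := maskSet_subset (by omega) hb'
            have := ih (s - 1) (by omega) b p1 b' p2 hne
            rw [hexp2] at this
            omega

/-- Any two distinct masks in `M(s,m)` differ in at least `2^(m-s+1)` positions. -/
theorem maskSet_min_distance (s m : ℕ) (hs : 1 ≤ s) (hsm : s ≤ m)
    (x : (Fin m → ZMod 2) → ZMod 2) (hx : x ∈ maskSet m s)
    (y : (Fin m → ZMod 2) → ZMod 2) (hy : y ∈ maskSet m s) (hxy : x ≠ y) :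
    2 ^ (m - s + 1) ≤ hammingDist x y := by
  have h : m - s + 1 = m + 1 - s := by omega
  rw [h]
  exact maskSet_key m s hs x hx y hy hxy
end

section
/- For all integers 2 ≤ s ≤ m, the minimum size of a label set for M(s,m) satisfies the upper bound L_min(s,m) ≤ 2^{s+1} · ((s−1)(1 + ⌈log₂ m⌉) − 1). -/
/-- A finite set `L` of coordinate positions is a label set for (distinguishes) `S`
if distinct vectors of `S` have distinct restrictions to `L`. -/
def Distinguishes {ι : Type*} (L : Finset ι) (S : Set (ι → ZMod 2)) : Prop :=
  ∀ x ∈ S, ∀ y ∈ S, (∀ i ∈ L, x i = y i) → x = y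

/-- `L_min(s, m)`: the minimum cardinality of a label set for `M(s, m)`. -/
noncomputable def Lmin (s m : ℕ) : ℕ :=
  sInf {k | ∃ L : Finset (Fin m → ZMod 2), L.card = k ∧ Distinguishes L (maskSet m s)}

/-!
Two distinct vectors of `M(s, m)` differ in at least `2^(m-s+1)` positions. Split both into their
halves, which lie in `M(s, m-1)`: if both halves differ, induction gives the bound in each half;
if only one does, at least one of the two vectors is a concatenation `(x, y)` with `x ∈ M(i, m-1)`,
`y ∈ M(s-i, m-1)`, so by monotonicity in `s` the differing halves lie in `M(s-1, m-1)`, where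
induction gives twice the bound. The recursion also gives `|M(s, m)| ≤ 2 (2m)^(s-1)`.

With `u = (s-1)(1+⌈log₂ m⌉) - 1` and `N = 2^(s+1) u`, a fixed pair of vectors agrees on `N`
uniformly random positions with probability at most `(1 - 2^(1-s))^N ≤ 2^(-4u)`, while there are
fewer than `2^(4u)` pairs once `u ≥ 3`; so some `N` positions form a label set. If `u < 3`, then
`s = 2`, `m ≤ 4`, and all `2^m` positions suffice.
-/

def concatHalves {m : ℕ} (x y : (Fin m → ZMod 2) → ZMod 2) : (Fin (m + 1) → ZMod 2) → ZMod 2 :=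
  fun p => if p 0 = 0 then x (Fin.tail p) else y (Fin.tail p)

section concatHalves

variable {m : ℕ} (x y x' y' : (Fin m → ZMod 2) → ZMod 2)

@[simp]
lemma concatHalves_cons_zero (q : Fin m → ZMod 2) : concatHalves x y (Fin.cons 0 q) = x q := by
  simp only [concatHalves, Fin.cons_zero, Fin.tail_cons, if_pos]

@[simp]
lemma concatHalves_cons_one (q : Fin m → ZMod 2) : concatHalves x y (Fin.cons 1 q) = y q := by
  simp only [concatHalves, Fin.cons_zero, Fin.tail_cons, if_neg one_ne_zero]

lemma concatHalves_self : concatHalves x x = fun p => x (Fin.tail p) := by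
  funext p
  exact ite_self _

lemma eq_concatHalves (f : (Fin (m + 1) → ZMod 2) → ZMod 2) :
    f = concatHalves (fun q => f (Fin.cons 0 q)) (fun q => f (Fin.cons 1 q)) := by
  funext p
  obtain ⟨a, q, rfl⟩ : ∃ a q, p = Fin.cons a q := ⟨p 0, Fin.tail p, (Fin.cons_self_tail p).symm⟩
  rcases (by decide : ∀ a : ZMod 2, a = 0 ∨ a = 1) a with rfl | rfl <;> simp

lemma hammingDist_concatHalves :
    hammingDist (concatHalves x y) (concatHalves x' y') = hammingDist x x' + hammingDist y y' := by
  simp only [hammingDist, Finset.card_filter]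
  rw [← (Fin.consEquiv fun _ => ZMod 2).sum_comp, Fintype.sum_prod_type,
    show ∀ g : ZMod 2 → ℕ, ∑ a, g a = g 0 + g 1 from Fin.sum_univ_two]
  simp [Fin.consEquiv]

end concatHalves

section maskSet

variable {m s : ℕ}

lemma const_mem_maskSet (m s : ℕ) (c : ZMod 2) : (fun _ => c) ∈ maskSet m s := by
  induction m generalizing s with
  | zero => trivial
  | succ m ih =>
    rw [maskSet]
    split_ifs
    · rcases (by decide : ∀ a : ZMod 2, a = 0 ∨ a = 1) c with rfl | rfl <;> simp
    · trivial
    · exact Or.inl ⟨_, ih s, rfl⟩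

lemma maskSet_succ_eq_univ (hs : 2 ≤ s) (hm : m + 1 ≤ Nat.clog 2 s) :
    maskSet (m + 1) s = Set.univ := by
  rw [maskSet, if_neg (by omega), if_pos hm]

lemma maskSet_eq_univ_of_two_pow_le (h : 2 ^ m ≤ s) : maskSet m s = Set.univ := by
  cases m with
  | zero => rfl
  | succ m =>
    refine maskSet_succ_eq_univ (le_trans (Nat.le_self_pow (by omega) 2) h) ?_
    exact (Nat.lt_clog_iff_pow_lt one_lt_two).2
      ((Nat.pow_lt_pow_right one_lt_two m.lt_succ_self).trans_le h)

lemma maskSet_succ_eq (hs : 2 ≤ s) (hm : Nat.clog 2 s ≤ m) :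
    maskSet (m + 1) s = (fun x => concatHalves x x) '' maskSet m s ∪
      ⋃ i ∈ Finset.Ico 1 s, Set.image2 concatHalves (maskSet m i) (maskSet m (s - i)) := by
  rw [maskSet, if_neg (by omega), if_neg (by omega)]
  congr 1
  · simp only [concatHalves_self]
  · refine Set.iUnion₂_congr fun i _ => Set.ext fun f => ?_
    constructor <;> rintro ⟨x, hx, y, hy, rfl⟩ <;> exact ⟨x, hx, y, hy, rfl⟩

lemma maskSet_subset_maskSet_succ (hs : 1 ≤ s) : maskSet m s ⊆ maskSet m (s + 1) := by
  induction m generalizing s with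
  | zero => exact Set.subset_univ _
  | succ m ih =>
    rcases hs.eq_or_lt with rfl | hs
    · intro f hf
      rw [maskSet, if_pos le_rfl] at hf
      rcases hf with rfl | rfl <;> exact const_mem_maskSet _ _ _
    by_cases hU : m + 1 ≤ Nat.clog 2 (s + 1)
    · rw [maskSet_succ_eq_univ (by omega) hU]
      exact Set.subset_univ _
    have hclog : Nat.clog 2 s ≤ Nat.clog 2 (s + 1) := Nat.clog_mono_right 2 (Nat.le_succ s)
    rw [maskSet_succ_eq hs (by omega), maskSet_succ_eq (by omega) (by omega)]
    refine Set.union_subset_union (Set.image_mono (ih (by omega))) ?_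
    refine Set.iUnion₂_subset fun i hi => ?_
    rw [Finset.mem_Ico] at hi
    refine Set.subset_iUnion₂_of_subset i (Finset.mem_Ico.2 ⟨hi.1, by omega⟩) ?_
    rw [show s + 1 - i = s - i + 1 by omega]
    exact Set.image2_subset_left (ih (by omega))

lemma maskSet_mono {a b : ℕ} (ha : 1 ≤ a) (hab : a ≤ b) : maskSet m a ⊆ maskSet m b := by
  induction b, hab using Nat.le_induction with
  | base => exact subset_rfl
  | succ b hab ih => exact ih.trans (maskSet_subset_maskSet_succ (ha.trans hab))

lemma exists_concatHalves_of_mem_maskSet_succ {f : (Fin (m + 1) → ZMod 2) → ZMod 2}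
    (hf : f ∈ maskSet (m + 1) s) :
    ∃ x ∈ maskSet m s, ∃ y ∈ maskSet m s, f = concatHalves x y ∧
      (x = y ∨ 2 ≤ s ∧ x ∈ maskSet m (s - 1) ∧ y ∈ maskSet m (s - 1)) := by
  by_cases h1 : s ≤ 1
  · rw [maskSet, if_pos h1] at hf
    obtain ⟨c, rfl⟩ : ∃ c : ZMod 2, f = fun _ => c := by
      rcases hf with rfl | rfl <;> exact ⟨_, rfl⟩
    exact ⟨_, const_mem_maskSet m s c, _, const_mem_maskSet m s c,
      by rw [concatHalves_self], Or.inl rfl⟩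
  by_cases hU : m + 1 ≤ Nat.clog 2 s
  · have hpow : 2 ^ m < s := (Nat.lt_clog_iff_pow_lt one_lt_two).1 hU
    simp only [maskSet_eq_univ_of_two_pow_le hpow.le,
      maskSet_eq_univ_of_two_pow_le (Nat.le_sub_one_of_lt hpow), Set.mem_univ, true_and, and_true]
    exact ⟨_, _, eq_concatHalves f, Or.inr (by omega)⟩
  rw [maskSet_succ_eq (by omega) (by omega)] at hf
  rcases hf with ⟨x, hx, rfl⟩ | hf
  · exact ⟨x, hx, x, hx, rfl, Or.inl rfl⟩
  simp only [Set.mem_iUnion, Finset.mem_Ico] at hf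
  obtain ⟨i, hi, x, hx, y, hy, rfl⟩ := hf
  have hx' := maskSet_mono hi.1 (by omega : i ≤ s - 1) hx
  have hy' := maskSet_mono (by omega) (by omega : s - i ≤ s - 1) hy
  exact ⟨x, maskSet_mono (by omega) (by omega) hx', y, maskSet_mono (by omega) (by omega) hy',
    rfl, Or.inr ⟨by omega, hx', hy'⟩⟩

end maskSet

lemma ne_and_both_of_diag_or_both {α : Type*} {Q : α → Prop} {x y x' y' : α}
    (h : x = y ∨ Q x ∧ Q y) (h' : x' = y' ∨ Q x' ∧ Q y') (hne : x ≠ x' ∨ y ≠ y')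
    (hnb : x = x' ∨ y = y') : (x ≠ x' ∧ Q x ∧ Q x') ∨ (y ≠ y' ∧ Q y ∧ Q y') := by
  rcases h with rfl | ⟨hx, hy⟩ <;> rcases h' with rfl | ⟨hx', hy'⟩ <;> grind

lemma two_pow_le_two_pow_mul_hammingDist {m s : ℕ} {f g : (Fin m → ZMod 2) → ZMod 2}
    (hf : f ∈ maskSet m s) (hg : g ∈ maskSet m s) (hfg : f ≠ g) :
    2 ^ m ≤ 2 ^ (s - 1) * hammingDist f g := by
  induction m generalizing s with
  | zero => simpa using Nat.mul_le_mul Nat.one_le_two_pow (hammingDist_pos.2 hfg)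
  | succ m ih =>
    obtain ⟨x, hx, y, hy, rfl, hxy⟩ := exists_concatHalves_of_mem_maskSet_succ hf
    obtain ⟨x', hx', y', hy', rfl, hxy'⟩ := exists_concatHalves_of_mem_maskSet_succ hg
    rw [hammingDist_concatHalves, pow_succ]
    by_cases hboth : x ≠ x' ∧ y ≠ y'
    · have h1 := ih hx hx' hboth.1
      have h2 := ih hy hy' hboth.2
      linarith
    have hne : x ≠ x' ∨ y ≠ y' := by
      by_contra! h
      exact hfg (by rw [h.1, h.2])
    have hhalf : ∀ a b, (2 ≤ s ∧ a ∈ maskSet m (s - 1)) → (2 ≤ s ∧ b ∈ maskSet m (s - 1)) →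
        a ≠ b → 2 ^ m * 2 ≤ 2 ^ (s - 1) * hammingDist a b := by
      rintro a b ⟨hs, ha⟩ ⟨-, hb⟩ hab
      have h := ih ha hb hab
      rw [show s - 1 = s - 1 - 1 + 1 by omega, pow_succ]
      nlinarith
    rcases ne_and_both_of_diag_or_both (Q := fun a => 2 ≤ s ∧ a ∈ maskSet m (s - 1))
      (by tauto) (by tauto) hne (by tauto) with ⟨hne, ha, hb⟩ | ⟨hne, ha, hb⟩
    · exact (hhalf _ _ ha hb hne).trans (Nat.mul_le_mul_left _ (Nat.le_add_right _ _))
    · exact (hhalf _ _ ha hb hne).trans (Nat.mul_le_mul_left _ (Nat.le_add_left _ _))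

lemma two_pow_sub_le_hammingDist {m s : ℕ} (hsm : s ≤ m + 1) {f g : (Fin m → ZMod 2) → ZMod 2}
    (hf : f ∈ maskSet m s) (hg : g ∈ maskSet m s) (hfg : f ≠ g) :
    2 ^ (m - (s - 1)) ≤ hammingDist f g := by
  have h := two_pow_le_two_pow_mul_hammingDist hf hg hfg
  rw [show 2 ^ m = 2 ^ (s - 1) * 2 ^ (m - (s - 1)) by rw [← pow_add]; congr 1; omega] at h
  exact Nat.le_of_mul_le_mul_left h (by positivity)

lemma ncard_image2_le {α β γ : Type*} (f : α → β → γ) {s : Set α} {t : Set β}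
    (hs : s.Finite) (ht : t.Finite) : (Set.image2 f s t).ncard ≤ s.ncard * t.ncard := by
  rw [← Set.image_prod, ← Set.ncard_prod]
  exact Set.ncard_image_le (hs.prod ht)

lemma two_pow_two_pow_succ_le {k s : ℕ} (h : 2 ^ k < s) :
    2 ^ 2 ^ (k + 1) ≤ 2 * (2 * (k + 1)) ^ (s - 1) := by
  have hsplit : 2 ^ 2 ^ (k + 1) = 2 ^ 2 ^ k * 2 ^ 2 ^ k := by rw [pow_succ, pow_mul, sq]
  have hs : 2 ^ k ≤ s - 1 := by omega
  calc 2 ^ 2 ^ (k + 1) ≤ 2 * (2 * (k + 1)) ^ 2 ^ k := by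
        rw [hsplit, mul_pow]
        rcases k with _ | k
        · norm_num
        · have : 2 ^ 2 ^ (k + 1) ≤ (k + 1 + 1) ^ 2 ^ (k + 1) := Nat.pow_le_pow_left (by omega) _
          exact (Nat.mul_le_mul_left _ this).trans (Nat.le_mul_of_pos_left _ two_pos)
    _ ≤ 2 * (2 * (k + 1)) ^ (s - 1) := by gcongr; omega

lemma two_mul_pow_add_le (x n : ℕ) :
    2 * x ^ n + n * (4 * x ^ (n - 1)) ≤ 2 * (x + 2) ^ n := by
  have := pow_add_mul_le_add_pow (a := x) (b := 2) (Nat.zero_le _) (Nat.zero_le _) n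
  linarith

lemma ncard_maskSet_succ_le (m s : ℕ) :
    (maskSet (m + 1) s).ncard ≤ 2 * (2 * (m + 1)) ^ (s - 1) := by
  induction m using Nat.strong_induction_on generalizing s with
  | _ m ih =>
  by_cases h1 : s ≤ 1
  · rw [maskSet, if_pos h1]
    calc ({fun _ => 0, fun _ => 1} : Set ((Fin (m + 1) → ZMod 2) → ZMod 2)).ncard
        ≤ 2 := (Set.ncard_insert_le _ _).trans (by simp)
      _ ≤ 2 * (2 * (m + 1)) ^ (s - 1) := Nat.le_mul_of_pos_right _ (by positivity)
  by_cases hU : m + 1 ≤ Nat.clog 2 s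
  · rw [maskSet_succ_eq_univ (by omega) hU, Set.ncard_univ, Nat.card_eq_fintype_card]
    simpa [ZMod.card] using two_pow_two_pow_succ_le ((Nat.lt_clog_iff_pow_lt one_lt_two).1 hU)
  obtain ⟨k, rfl⟩ : ∃ k, m = k + 1 := by
    refine Nat.exists_eq_succ_of_ne_zero fun hm => ?_
    have : 0 < Nat.clog 2 s := (Nat.lt_clog_iff_pow_lt one_lt_two).2 (by omega)
    omega
  have hprod : ∀ i ∈ Finset.Ico 1 s, (Set.image2 concatHalves (maskSet (k + 1) i)
      (maskSet (k + 1) (s - i))).ncard ≤ 4 * (2 * (k + 1)) ^ (s - 1 - 1) := by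
    intro i hi
    rw [Finset.mem_Ico] at hi
    calc _ ≤ (maskSet (k + 1) i).ncard * (maskSet (k + 1) (s - i)).ncard :=
          ncard_image2_le _ (Set.toFinite _) (Set.toFinite _)
      _ ≤ 2 * (2 * (k + 1)) ^ (i - 1) * (2 * (2 * (k + 1)) ^ (s - i - 1)) :=
          Nat.mul_le_mul (ih k k.lt_succ_self i) (ih k k.lt_succ_self (s - i))
      _ = 4 * (2 * (k + 1)) ^ (s - 1 - 1) := by
          rw [show s - 1 - 1 = (i - 1) + (s - i - 1) by omega, pow_add]
          ring
  rw [maskSet_succ_eq (by omega) (by omega)]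
  calc _ ≤ _ := Set.ncard_union_le _ _
    _ ≤ (maskSet (k + 1) s).ncard + ∑ i ∈ Finset.Ico 1 s, (Set.image2 concatHalves
          (maskSet (k + 1) i) (maskSet (k + 1) (s - i))).ncard :=
        add_le_add (Set.ncard_image_le (Set.toFinite _)) (Finset.set_ncard_biUnion_le _ _)
    _ ≤ 2 * (2 * (k + 1)) ^ (s - 1) + (s - 1) * (4 * (2 * (k + 1)) ^ (s - 1 - 1)) := by
        refine add_le_add (ih k k.lt_succ_self s) ((Finset.sum_le_sum hprod).trans ?_)
        simp
    _ ≤ 2 * (2 * (k + 1) + 2) ^ (s - 1) := two_mul_pow_add_le _ _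
    _ = 2 * (2 * (k + 1 + 1)) ^ (s - 1) := by ring

lemma ncard_maskSet_le_two_pow {m : ℕ} (hm : 1 ≤ m) (s : ℕ) :
    (maskSet m s).ncard ≤ 2 ^ ((s - 1) * (1 + Nat.clog 2 m) + 1) := by
  obtain ⟨k, rfl⟩ : ∃ k, m = k + 1 := ⟨m - 1, by omega⟩
  calc _ ≤ 2 * (2 * (k + 1)) ^ (s - 1) := ncard_maskSet_succ_le k s
    _ ≤ 2 * (2 * 2 ^ Nat.clog 2 (k + 1)) ^ (s - 1) := by
        gcongr
        exact Nat.le_pow_clog one_lt_two _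
    _ = 2 ^ ((s - 1) * (1 + Nat.clog 2 (k + 1)) + 1) := by
        rw [← pow_succ', ← pow_mul, pow_succ]
        ring

lemma card_filter_eq_eq_card_sub_hammingDist {ι β : Type*} [Fintype ι] [DecidableEq β]
    (f g : ι → β) : (Finset.univ.filter fun i => f i = g i).card =
      Fintype.card ι - hammingDist f g := by
  rw [hammingDist, ← Finset.card_univ,
    ← Finset.card_filter_add_card_filter_not (s := Finset.univ) (fun i => f i = g i)]
  simp

theorem exists_distinguishes_card_le {ι : Type*} [Fintype ι] (S : Set (ι → ZMod 2))
    (D N : ℕ) (hD : ∀ f ∈ S, ∀ g ∈ S, f ≠ g → D ≤ hammingDist f g)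
    (hN : S.ncard ^ 2 * (Fintype.card ι - D) ^ N < Fintype.card ι ^ N) :
    ∃ L : Finset ι, L.card ≤ N ∧ Distinguishes L S := by
  classical
  set F := (Set.toFinite S).toFinset
  let bad : Finset (Fin N → ι) := F.offDiag.biUnion fun fg =>
    Fintype.piFinset fun _ => Finset.univ.filter fun i => fg.1 i = fg.2 i
  have hbad : bad.card < (Finset.univ : Finset (Fin N → ι)).card := by
    calc bad.card ≤ ∑ fg ∈ F.offDiag, (Fintype.card ι - D) ^ N := by
          refine Finset.card_biUnion_le.trans (Finset.sum_le_sum fun fg hfg => ?_)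
          obtain ⟨hf, hg, hfg⟩ := Finset.mem_offDiag.1 hfg
          rw [Fintype.card_piFinset_const, card_filter_eq_eq_card_sub_hammingDist]
          gcongr
          exact hD _ (by simpa [F] using hf) _ (by simpa [F] using hg) hfg
      _ ≤ S.ncard ^ 2 * (Fintype.card ι - D) ^ N := by
          rw [Finset.sum_const, smul_eq_mul, Set.ncard_eq_toFinset_card S, sq]
          gcongr
          exact Finset.offDiag_card F ▸ Nat.sub_le _ _
      _ < _ := by simpa using hN
  obtain ⟨T, -, hT⟩ := Finset.exists_mem_notMem_of_card_lt_card hbad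
  refine ⟨Finset.univ.image T, Finset.card_image_le.trans (by simp), ?_⟩
  intro f hf g hg hfg
  by_contra hne
  refine hT (Finset.mem_biUnion.2 ⟨(f, g), ?_, Fintype.mem_piFinset.2 fun k => ?_⟩)
  · simpa [F] using ⟨hf, hg, hne⟩
  · simpa using hfg (T k) (Finset.mem_image_of_mem T (Finset.mem_univ k))

lemma two_mul_sub_one_pow_le (q : ℕ) (hq : 1 ≤ q) : 2 * (q - 1) ^ q ≤ q ^ q := by
  obtain ⟨p, rfl⟩ : ∃ p, q = p + 1 := ⟨q - 1, by omega⟩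
  have h := pow_add_mul_le_add_pow (a := p) (b := 1) (Nat.zero_le _) (Nat.zero_le _) (p + 1)
  have : p ^ (p + 1) ≤ (p + 1) * p ^ p := by rw [pow_succ']; gcongr; omega
  simp only [Nat.add_sub_cancel, mul_one] at h ⊢
  linarith

lemma sq_mul_pow_lt_pow {K q r u : ℕ} (hq : 2 ≤ q) (hr : 0 < r) (hK : K ^ 2 < 2 ^ (4 * u)) :
    K ^ 2 * (r * q - r) ^ (q * (4 * u)) < (r * q) ^ (q * (4 * u)) := by
  have hpos : 0 < r ^ (q * (4 * u)) * ((q - 1) ^ q) ^ (4 * u) := by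
    have : 0 < q - 1 := by omega
    positivity
  calc K ^ 2 * (r * q - r) ^ (q * (4 * u))
      = K ^ 2 * (r ^ (q * (4 * u)) * ((q - 1) ^ q) ^ (4 * u)) := by
        rw [← Nat.mul_sub_one, mul_pow, pow_mul (q - 1)]
    _ < 2 ^ (4 * u) * (r ^ (q * (4 * u)) * ((q - 1) ^ q) ^ (4 * u)) :=
        Nat.mul_lt_mul_of_pos_right hK hpos
    _ = r ^ (q * (4 * u)) * (2 * (q - 1) ^ q) ^ (4 * u) := by ring
    _ ≤ r ^ (q * (4 * u)) * (q ^ q) ^ (4 * u) := by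
        gcongr
        exact two_mul_sub_one_pow_le q (by omega)
    _ = (r * q) ^ (q * (4 * u)) := by rw [mul_pow, pow_mul q]

lemma Lmin_le_card {s m : ℕ} {L : Finset (Fin m → ZMod 2)} (h : Distinguishes L (maskSet m s)) :
    Lmin s m ≤ L.card :=
  Nat.sInf_le ⟨L, rfl, h⟩

lemma Lmin_le_two_pow (s m : ℕ) : Lmin s m ≤ 2 ^ m :=
  (Lmin_le_card (L := Finset.univ) fun _ _ _ _ h => funext fun i => h i (Finset.mem_univ i)
    ).trans_eq (by simp [ZMod.card])

lemma Lmin_le_of_ncard_sq_lt {s m u : ℕ} (hs : 2 ≤ s) (hsm : s ≤ m + 1)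
    (hK : (maskSet m s).ncard ^ 2 < 2 ^ (4 * u)) : Lmin s m ≤ 2 ^ (s + 1) * u := by
  have hcard : Fintype.card (Fin m → ZMod 2) = 2 ^ (m - (s - 1)) * 2 ^ (s - 1) := by
    simp [ZMod.card, ← pow_add, Nat.sub_add_cancel (by omega : s - 1 ≤ m)]
  have hN : 2 ^ (s + 1) * u = 2 ^ (s - 1) * (4 * u) := by
    rw [show s + 1 = s - 1 + 2 by omega, pow_add]
    ring
  obtain ⟨L, hL, hLdist⟩ := exists_distinguishes_card_le (maskSet m s) _ (2 ^ (s + 1) * u)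
    (fun _ hf _ hg hfg => two_pow_sub_le_hammingDist hsm hf hg hfg)
    (by rw [hcard, hN]; exact sq_mul_pow_lt_pow (Nat.le_self_pow (by omega) 2) (by positivity) hK)
  exact (Lmin_le_card hLdist).trans hL

/-- Upper bound on the minimum label size:
`L_min(s,m) ≤ 2^(s+1) * ((s-1) * (1 + ⌈log₂ m⌉) - 1)`. -/
theorem Lmin_upper_explicit (s m : ℕ) (hs : 2 ≤ s) (hsm : s ≤ m) :
    Lmin s m ≤ 2 ^ (s + 1) * ((s - 1) * (1 + Nat.clog 2 m) - 1) := by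
  have hm : m ≤ 2 ^ Nat.clog 2 m := Nat.le_pow_clog one_lt_two m
  have hc : 1 ≤ Nat.clog 2 m := (Nat.lt_clog_iff_pow_lt one_lt_two).2 (by omega)
  have hK := ncard_maskSet_le_two_pow (by omega : 1 ≤ m) s
  generalize Nat.clog 2 m = c at hm hc hK
  by_cases hu : 3 ≤ (s - 1) * (1 + c) - 1
  · refine Lmin_le_of_ncard_sq_lt hs (by omega) ?_
    calc _ ≤ (2 ^ ((s - 1) * (1 + c) - 1 + 2)) ^ 2 :=
          Nat.pow_le_pow_left (hK.trans_eq (by congr 1; omega)) 2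
      _ < 2 ^ (4 * ((s - 1) * (1 + c) - 1)) := by
          rw [← pow_mul]
          exact Nat.pow_lt_pow_right one_lt_two (by omega)
  · obtain rfl : s = 2 := by
      have : (s - 1) * 2 ≤ (s - 1) * (1 + c) := Nat.mul_le_mul_left _ (by omega)
      omega
    have : c ≤ 2 := by omega
    calc Lmin 2 m ≤ 2 ^ 2 ^ c := (Lmin_le_two_pow 2 m).trans (Nat.pow_le_pow_right two_pos hm)
      _ ≤ _ := by interval_cases c <;> omega
end

section
/- For every integer m ≥ 1, the mask set M(2,m) contains exactly 2(m+1) distinct masks: |M(2,m)| = 2(m+1). -/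
def phi (m : ℕ) : ZMod 2 × Option (Fin m) → (Fin m → ZMod 2) → ZMod 2 :=
  fun z p => z.1 + z.2.elim 0 p

lemma phi_inj (m : ℕ) : Function.Injective (phi m) := by
  rintro ⟨c, o⟩ ⟨c', o'⟩ h
  have h0 := congrFun h (fun _ => 0)
  simp only [phi, Option.elim] at h0
  have hc : c = c' := by
    cases o <;> cases o' <;> simpa using h0
  subst hc
  match o, o' with
  | none, none => rfl
  | none, some k =>
    have h1 := congrFun h (fun j => if j = k then 1 else 0)
    simp [phi] at h1
  | some k, none =>
    have h1 := congrFun h (fun j => if j = k then 1 else 0)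
    simp [phi] at h1
  | some k, some k' =>
    by_cases hk : k = k'
    · rw [hk]
    · have h1 := congrFun h (fun j => if j = k then 1 else 0)
      simp [phi, hk] at h1
      exact absurd h1.symm hk

lemma maskSet_one (n : ℕ) (h1 : 1 ≤ n) :
    maskSet n 1 = {fun _ => 0, fun _ => 1} := by
  cases n with
  | zero => omega
  | succ k => simp [maskSet]

lemma maskSet_two_succ (n : ℕ) (h1 : 1 ≤ n) :
    maskSet (n+1) 2 =
      ((fun g : (Fin n → ZMod 2) → ZMod 2 => fun p => g (Fin.tail p)) '' maskSet n 2) ∪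
        {f | ∃ x ∈ maskSet n 1, ∃ y ∈ maskSet n 1,
            f = fun p => if p 0 = 0 then x (Fin.tail p) else y (Fin.tail p)} := by
  have hclog : Nat.clog 2 2 = 1 := by decide
  rw [maskSet, if_neg (by norm_num), if_neg (by omega)]
  congr 1
  rw [show Finset.Ico 1 2 = {1} by rfl]
  simp

lemma maskSet_two_eq (m : ℕ) (hm : 1 ≤ m) : maskSet m 2 = Set.range (phi m) := by
  induction m with
  | zero => omega
  | succ n ih =>
    rcases Nat.eq_zero_or_pos n with h0 | h1
    · subst h0
      have huniv : maskSet 1 2 = Set.univ := by simp [maskSet, Nat.clog]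
      rw [huniv, eq_comm, Set.range_eq_univ]
      exact ((Fintype.bijective_iff_injective_and_card (phi 1)).mpr
        ⟨phi_inj 1, by simp⟩).surjective
    · rw [maskSet_two_succ n h1, maskSet_one n h1, ih h1]
      ext f
      constructor
      · rintro (⟨g, ⟨⟨c, o⟩, rfl⟩, rfl⟩ | ⟨x, hx, y, hy, rfl⟩)
        · cases o with
          | none => exact ⟨(c, none), rfl⟩
          | some k => exact ⟨(c, some k.succ), rfl⟩
        · rcases hx with rfl | rfl <;> rcases hy with rfl | rfl
          · exact ⟨(0, none), by funext p; simp [phi]⟩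
          · refine ⟨(0, some 0), funext fun p => ?_⟩
            have : ∀ b : ZMod 2, (0:ZMod 2) + b = if b = 0 then 0 else 1 := by decide
            simpa [phi] using this (p 0)
          · refine ⟨(1, some 0), funext fun p => ?_⟩
            have : ∀ b : ZMod 2, (1:ZMod 2) + b = if b = 0 then 1 else 0 := by decide
            simpa [phi] using this (p 0)
          · exact ⟨(1, none), by funext p; simp [phi]⟩
      · rintro ⟨⟨c, o⟩, rfl⟩
        cases o with
        | none => exact Or.inl ⟨phi n (c, none), ⟨(c, none), rfl⟩, rfl⟩
        | some k =>
          refine k.cases ?_ (fun j => ?_)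
          · refine Or.inr ⟨fun _ => c, ?_, fun _ => c + 1, ?_, funext fun p => ?_⟩
            · simp only [Set.mem_insert_iff, Set.mem_singleton_iff]
              fin_cases c
              · exact Or.inl (funext fun _ => by decide)
              · exact Or.inr (funext fun _ => by decide)
            · simp only [Set.mem_insert_iff, Set.mem_singleton_iff]
              fin_cases c
              · exact Or.inr (funext fun _ => by decide)
              · exact Or.inl (funext fun _ => by decide)
            · have : ∀ b : ZMod 2, c + b = if b = 0 then c else c + 1 := by
                fin_cases c <;> decide
              simpa [phi] using this (p 0)
          · exact Or.inl ⟨phi n (c, some j), ⟨(c, some j), rfl⟩, rfl⟩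

/-- `M(2,m)` contains exactly `2(m+1)` distinct masks. -/
theorem maskSet_two_card (m : ℕ) (hm : 1 ≤ m) :
    (maskSet m 2).ncard = 2 * (m + 1) := by
  rw [maskSet_two_eq m hm, ← Set.image_univ,
    Set.ncard_image_of_injective _ (phi_inj m), Set.ncard_univ,
    Nat.card_eq_fintype_card]
  simp
end
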